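/- Let r and N be positive integers with N ≥ 2^r, let m be a positive integer, and let m₁, …, m_r be integers. Then there exist a positive integer n ≤ N and integers a₁, …, a_r such that |a_i − n·m_i/m| ≤ 1/⌊N^{1/r}⌋ for every i = 1, …, r. -/

import Mathlib

/-!
Pigeonhole: the `Q ^ r + 1` points `(fract (n xᵢ))ᵢ`, `0 ≤ n ≤ Q ^ r`, lie in the `Q ^ r` boxes
`∏ᵢ [kᵢ/Q, (kᵢ+1)/Q)`, so two of them, `p < q`, share a box, and `n = q - p` approximates every
`xᵢ` to within `1/Q`. With `Q = ⌊N^(1/r)⌋₊` we have `Q ^ r ≤ N`.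
-/

open Finset Int

lemma abs_fract_sub_fract_le_of_floor_mul_eq {Q : ℕ} (hQ : 0 < Q) {u v : ℝ}
    (h : ⌊Q * fract u⌋ = ⌊Q * fract v⌋) : |fract u - fract v| ≤ 1 / Q := by
  have hQ' : (0 : ℝ) < Q := by exact_mod_cast hQ
  have hlt := abs_sub_lt_one_of_floor_eq_floor h
  rw [← mul_sub, abs_mul, abs_of_pos hQ'] at hlt
  rw [le_div_iff₀ hQ', mul_comm]
  exact hlt.le

lemma floor_mul_fract_mem_Ico {Q : ℕ} (hQ : 0 < Q) (u : ℝ) : ⌊Q * fract u⌋ ∈ Ico (0 : ℤ) Q := by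
  rw [mem_Ico, floor_nonneg, floor_lt]
  push_cast
  exact ⟨by positivity, mul_lt_of_lt_one_right (by exact_mod_cast hQ) (fract_lt_one u)⟩

theorem exists_nat_forall_abs_sub_mul_le {ι : Type*} [Fintype ι] (x : ι → ℝ) {Q : ℕ}
    (hQ : 0 < Q) :
    ∃ n : ℕ, 0 < n ∧ n ≤ Q ^ Fintype.card ι ∧ ∃ a : ι → ℤ, ∀ i, |(a i : ℝ) - n * x i| ≤ 1 / Q := by
  classical
  obtain ⟨p, hp, q, hq, hne, heq⟩ := exists_ne_map_eq_of_card_lt_of_maps_to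
    (s := range (Q ^ Fintype.card ι + 1))
    (t := Fintype.piFinset fun _ : ι => Ico (0 : ℤ) Q)
    (f := fun n i => ⌊Q * fract (n * x i)⌋) (by simp)
    (fun n _ => Fintype.mem_piFinset.2 fun i => floor_mul_fract_mem_Ico hQ _)
  wlog hpq : p < q generalizing p q
  · exact this q hq p hp hne.symm heq.symm (lt_of_le_of_ne (not_lt.1 hpq) hne.symm)
  refine ⟨q - p, by omega, by simp at hq; omega, fun i => ⌊q * x i⌋ - ⌊p * x i⌋, fun i => ?_⟩
  calc |((⌊q * x i⌋ - ⌊p * x i⌋ : ℤ) : ℝ) - ((q - p : ℕ) : ℝ) * x i|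
      = |fract (p * x i) - fract (q * x i)| := by
        rw [Nat.cast_sub hpq.le]; unfold fract; push_cast; congr 1; ring
    _ ≤ 1 / Q := abs_fract_sub_fract_le_of_floor_mul_eq hQ (congrFun heq i)

lemma one_le_floor_rpow_one_div {x : ℝ} (hx : 1 ≤ x) (r : ℕ) : 1 ≤ ⌊x ^ ((1 : ℝ) / r)⌋₊ :=
  Nat.le_floor (by exact_mod_cast Real.one_le_rpow hx (by positivity))

lemma floor_rpow_one_div_pow_le {x : ℝ} (hx : 1 ≤ x) (r : ℕ) :
    (⌊x ^ ((1 : ℝ) / r)⌋₊ : ℝ) ^ r ≤ x := by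
  rcases eq_or_ne r 0 with rfl | hr
  · simpa using hx
  calc (⌊x ^ ((1 : ℝ) / r)⌋₊ : ℝ) ^ r ≤ (x ^ ((1 : ℝ) / r)) ^ r :=
        pow_le_pow_left₀ (by positivity) (Nat.floor_le (by positivity)) r
    _ = x := by rw [one_div, Real.rpow_inv_natCast_pow (by linarith) hr]

theorem stmt4_general (r N m : ℕ) (hN : 2 ^ r ≤ N)
    (mi : Fin r → ℤ) :
    ∃ n : ℕ, 0 < n ∧ n ≤ N ∧ ∃ a : Fin r → ℤ,
      ∀ i : Fin r, |(a i : ℝ) - (n : ℝ) * (mi i : ℝ) / (m : ℝ)| ≤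
        1 / (⌊(N : ℝ) ^ ((1 : ℝ) / (r : ℝ))⌋₊ : ℝ) := by
  have hN1 : (1 : ℝ) ≤ N := by exact_mod_cast (Nat.one_le_two_pow).trans hN
  obtain ⟨n, hn, hnQ, a, ha⟩ := exists_nat_forall_abs_sub_mul_le (fun i => (mi i : ℝ) / m)
    (one_le_floor_rpow_one_div hN1 r)
  have hQN : ⌊(N : ℝ) ^ ((1 : ℝ) / r)⌋₊ ^ r ≤ N := by
    exact_mod_cast floor_rpow_one_div_pow_le hN1 r
  refine ⟨n, hn, hnQ.trans (by rwa [Fintype.card_fin]), a, fun i => ?_⟩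
  simpa only [mul_div_assoc] using ha i

/-- Dirichlet's simultaneous diophantine approximation for the rationals `mᵢ/m`:
for `N ≥ 2^r` there is a common multiplier `n ≤ N` and integers `aᵢ` with
`|aᵢ - n·mᵢ/m| ≤ 1/⌊N^(1/r)⌋`. -/
theorem stmt4 (r N m : ℕ) (hr : 0 < r) (hN : 2 ^ r ≤ N) (hm : 0 < m)
    (mi : Fin r → ℤ) :
    ∃ n : ℕ, 0 < n ∧ n ≤ N ∧ ∃ a : Fin r → ℤ,
      ∀ i : Fin r, |(a i : ℝ) - (n : ℝ) * (mi i : ℝ) / (m : ℝ)| ≤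
        1 / (⌊(N : ℝ) ^ ((1 : ℝ) / (r : ℝ))⌋₊ : ℝ) :=
  stmt4_general r N m hN mi
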